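/- Let τ : ℤ × ℝ² → ℝ, written (n, T₁, T₂) ↦ τ(n), be nowhere zero and twice continuously differentiable in (T₁, T₂). Define v(n) = τ(n+1)τ(n−1)/τ(n)² and f₀(n) = v(n)·(∂_{T₁}τ(n+1)/τ(n+1) − ∂_{T₁}τ(n−1)/τ(n−1)). Then for each n and (T₁, T₂) the second equation of the Toda lattice of type B, ∂_{T₂}v(n) − ∂_{T₁}f₀(n) + 2v(n)²(v(n+1) − v(n−1)) = 0, holds if and only if τ satisfies the equation ∂_{T₂}log(τ(n−1)τ(n+1)/τ(n)²) + ∂²_{T₁}log(τ(n−1)/τ(n+1)) + ∂_{T₁}log(τ(n−1)τ(n+1)/τ(n)²) · ∂_{T₁}log(τ(n−1)/τ(n+1)) = 2τ(n−2)τ(n+1)/(τ(n−1)τ(n)) − 2τ(n+2)τ(n−1)/(τ(n+1)τ(n)), where for a nonvanishing differentiable function F, ∂ log F denotes ∂F/F (so the identity is understood with all logarithmic derivatives written as quotients of derivatives by the functions themselves). -/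

import Mathlib

/-- Partial derivative in the first time variable `T₁` (real-valued). -/
noncomputable def dT1 (u : ℝ × ℝ → ℝ) (p : ℝ × ℝ) : ℝ :=
  deriv (fun t => u (t, p.2)) p.1

/-- Partial derivative in the second time variable `T₂` (real-valued). -/
noncomputable def dT2 (u : ℝ × ℝ → ℝ) (p : ℝ × ℝ) : ℝ :=
  deriv (fun t => u (p.1, t)) p.2

/-!
With `v = τ(n-1)τ(n+1)/τ(n)²` and `w = ∂₁ log(τ(n-1)/τ(n+1))` one has `f₀ = -v w`, so by the
product rule the left-hand side of the Toda equation is `v` times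
`∂₂ log v + ∂₁ w + ∂₁ log v · w + 2 v (v(n+1) - v(n-1))`. Since
`v(n) v(n-1) = τ(n-2)τ(n+1)/(τ(n-1)τ(n))` and `v(n) v(n+1) = τ(n+2)τ(n-1)/(τ(n+1)τ(n))`,
the vanishing of the second factor is the `τ`-equation, and `v ≠ 0`.
-/

section PartialDerivative

variable {u w : ℝ × ℝ → ℝ} {p : ℝ × ℝ}

theorem DifferentiableAt.hasDerivAt_fderiv_apply_slice (hu : DifferentiableAt ℝ u p) :
    HasDerivAt (fun t => u (t, p.2)) (fderiv ℝ u p (1, 0)) p.1 :=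
  hu.hasFDerivAt.comp_hasDerivAt p.1 ((hasDerivAt_id p.1).prodMk (hasDerivAt_const p.1 p.2))

theorem DifferentiableAt.differentiableAt_slice (hu : DifferentiableAt ℝ u p) :
    DifferentiableAt ℝ (fun t => u (t, p.2)) p.1 :=
  hu.hasDerivAt_fderiv_apply_slice.differentiableAt

theorem dT1_eq_fderiv_apply (hu : DifferentiableAt ℝ u p) : dT1 u p = fderiv ℝ u p (1, 0) :=
  hu.hasDerivAt_fderiv_apply_slice.deriv

theorem ContDiff.differentiable_dT1 (hu : ContDiff ℝ 2 u) : Differentiable ℝ (dT1 u) := by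
  have hdT1 : dT1 u = fun q => fderiv ℝ u q (1, 0) :=
    funext fun q => dT1_eq_fderiv_apply (hu.differentiable two_ne_zero q)
  rw [hdT1]
  exact ((hu.fderiv_right one_add_one_eq_two.le).clm_apply contDiff_const).differentiable
    one_ne_zero

theorem dT1_neg : dT1 (fun q => -u q) p = -dT1 u p :=
  deriv.fun_neg

theorem dT1_mul (hu : DifferentiableAt ℝ u p) (hw : DifferentiableAt ℝ w p) :
    dT1 (fun q => u q * w q) p = dT1 u p * w p + u p * dT1 w p :=
  deriv_mul hu.differentiableAt_slice hw.differentiableAt_slice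

theorem dT1_div_div_eq_sub (hu : DifferentiableAt ℝ u p) (hw : DifferentiableAt ℝ w p)
    (hu₀ : u p ≠ 0) (hw₀ : w p ≠ 0) :
    dT1 (fun q => u q / w q) p / (u p / w p) = dT1 u p / u p - dT1 w p / w p :=
  logDeriv_div (f := fun t => u (t, p.2)) (g := fun t => w (t, p.2)) p.1 hu₀ hw₀
    hu.differentiableAt_slice hw.differentiableAt_slice

theorem dT1_mul_sub_logDeriv {a c V : ℝ × ℝ → ℝ} (ha : ContDiff ℝ 2 a) (hc : ContDiff ℝ 2 c)
    (ha₀ : ∀ q, a q ≠ 0) (hc₀ : ∀ q, c q ≠ 0) (hV : DifferentiableAt ℝ V p) :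
    dT1 (fun q => V q * (dT1 c q / c q - dT1 a q / a q)) p
      = -(dT1 V p * (dT1 (fun r => a r / c r) p / (a p / c p))
        + V p * dT1 (fun q => dT1 (fun r => a r / c r) q / (a q / c q)) p) := by
  have hda := ha.differentiable two_ne_zero
  have hdc := hc.differentiable two_ne_zero
  have hℓ : (fun q => dT1 (fun r => a r / c r) q / (a q / c q))
      = fun q => dT1 a q / a q - dT1 c q / c q :=
    funext fun q => dT1_div_div_eq_sub (hda q) (hdc q) (ha₀ q) (hc₀ q)
  have hℓd : DifferentiableAt ℝ (fun q => dT1 a q / a q - dT1 c q / c q) p := by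
    have := ha.differentiable_dT1
    have := hc.differentiable_dT1
    fun_prop (disch := simp [ha₀, hc₀])
  calc dT1 (fun q => V q * (dT1 c q / c q - dT1 a q / a q)) p
      = dT1 (fun q => -(V q * (dT1 a q / a q - dT1 c q / c q))) p := by
        congr 1; funext q; ring
    _ = _ := by rw [dT1_neg, dT1_mul hV hℓd, hℓ, congrFun hℓ p]

end PartialDerivative

/-- the second equation of the Toda lattice of type B is
equivalent, for `v`, `f₀` expressed through a nowhere vanishing tau-function
`τ`, to the cubic (in `τ`) equation, with all logarithmic derivatives
written as quotients of derivatives by the functions themselves. -/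
theorem typeB_second_equation_tau_form
    (τ : ℤ → ℝ × ℝ → ℝ)
    (hτne : ∀ (n : ℤ) (p : ℝ × ℝ), τ n p ≠ 0)
    (hτ : ∀ n : ℤ, ContDiff ℝ 2 (fun p : ℝ × ℝ => τ n p))
    (v f₀ : ℤ → ℝ × ℝ → ℝ)
    (hv : ∀ (n : ℤ) (p : ℝ × ℝ),
      v n p = τ (n + 1) p * τ (n - 1) p / (τ n p) ^ 2)
    (hf₀ : ∀ (n : ℤ) (p : ℝ × ℝ),
      f₀ n p = v n p * (dT1 (τ (n + 1)) p / τ (n + 1) p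
        - dT1 (τ (n - 1)) p / τ (n - 1) p)) :
    ∀ (n : ℤ) (p : ℝ × ℝ),
      (dT2 (v n) p - dT1 (f₀ n) p
          + 2 * (v n p) ^ 2 * (v (n + 1) p - v (n - 1) p) = 0)
        ↔ (dT2 (fun q => τ (n - 1) q * τ (n + 1) q / (τ n q) ^ 2) p
              / (τ (n - 1) p * τ (n + 1) p / (τ n p) ^ 2)
            + dT1 (fun q => dT1 (fun r => τ (n - 1) r / τ (n + 1) r) q
                / (τ (n - 1) q / τ (n + 1) q)) p
            + (dT1 (fun q => τ (n - 1) q * τ (n + 1) q / (τ n q) ^ 2) p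
                / (τ (n - 1) p * τ (n + 1) p / (τ n p) ^ 2))
              * (dT1 (fun q => τ (n - 1) q / τ (n + 1) q) p
                / (τ (n - 1) p / τ (n + 1) p))
          = 2 * (τ (n - 2) p * τ (n + 1) p) / (τ (n - 1) p * τ n p)
            - 2 * (τ (n + 2) p * τ (n - 1) p) / (τ (n + 1) p * τ n p)) := by
  intro n p
  have hvn : (fun q => τ (n - 1) q * τ (n + 1) q / τ n q ^ 2) = v n :=
    funext fun q => by rw [hv, mul_comm]
  have hvn_p : τ (n - 1) p * τ (n + 1) p / τ n p ^ 2 = v n p := congrFun hvn p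
  have hv₀ : v n p ≠ 0 :=
    hvn_p ▸ div_ne_zero (mul_ne_zero (hτne _ p) (hτne _ p)) (pow_ne_zero 2 (hτne n p))
  have hvd : DifferentiableAt ℝ (v n) p := by
    have hdiff (m : ℤ) : Differentiable ℝ (τ m) := (hτ m).differentiable two_ne_zero
    rw [← hvn]
    fun_prop (disch := simp [hτne])
  have hrhs : 2 * (τ (n - 2) p * τ (n + 1) p) / (τ (n - 1) p * τ n p)
        - 2 * (τ (n + 2) p * τ (n - 1) p) / (τ (n + 1) p * τ n p)
      = 2 * v n p * (v (n - 1) p - v (n + 1) p) := by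
    rw [hv n, hv (n - 1), hv (n + 1), show n - 1 - 1 = n - 2 by ring, sub_add_cancel,
      add_sub_cancel_right, show n + 1 + 1 = n + 2 by ring]
    field_simp [hτne]
  rw [show f₀ n = fun q => v n q * (dT1 (τ (n + 1)) q / τ (n + 1) q
      - dT1 (τ (n - 1)) q / τ (n - 1) q) from funext (hf₀ n),
    dT1_mul_sub_logDeriv (hτ (n - 1)) (hτ (n + 1)) (hτne _) (hτne _) hvd, hvn, hvn_p, hrhs]
  field_simp
  constructor <;> intro h <;> linarith
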